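/- arXiv:2603.01519 — 4 statements merged into one kernel-verified Lean document; each statement's English description precedes it below -/
import Mathlib

section
/- If ε : ℝ^d → ℝ^d is a smooth compactly supported map with sup over r of the operator norm of the Jacobian ε'(r) strictly less than 1, then Id + ε is a C^∞-diffeomorphism of ℝ^d. -/
open scoped ContDiff NNReal

set_option synthInstance.maxHeartbeats 400000
set_option maxHeartbeats 1000000

/-- `g` is a `C^∞` diffeomorphism of `ℝ^d`. -/
def IsDiffeo {d : ℕ} (g : EuclideanSpace ℝ (Fin d) → EuclideanSpace ℝ (Fin d)) : Prop :=
  Function.Bijective g ∧ ContDiff ℝ (⊤ : ℕ∞) g ∧ ContDiff ℝ (⊤ : ℕ∞) (Function.invFun g)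

/-- If `ε` is smooth and compactly supported with `sup_r ‖ε'(r)‖ < 1`, then `Id + ε` is a
`C^∞` diffeomorphism of `ℝ^d`. -/
theorem id_add_eps_isDiffeo {d : ℕ}
    (ε : EuclideanSpace ℝ (Fin d) → EuclideanSpace ℝ (Fin d))
    (hε : ContDiff ℝ (⊤ : ℕ∞) ε) (hεc : HasCompactSupport ε)
    (hsmall : (⨆ r : EuclideanSpace ℝ (Fin d), ‖fderiv ℝ ε r‖) < 1) :
    IsDiffeo (fun r => r + ε r) := by
  classical
  have hEd : True := trivial
  set f : EuclideanSpace ℝ (Fin d) → EuclideanSpace ℝ (Fin d) := fun r => r + ε r with hf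
  have hεd : Differentiable ℝ ε := hε.differentiable (by simp)
  have hfc : Continuous (fderiv ℝ ε) := hε.continuous_fderiv (by simp)
  have hbdd : BddAbove (Set.range fun r : EuclideanSpace ℝ (Fin d) => ‖fderiv ℝ ε r‖) :=
    hfc.norm.bddAbove_range_of_hasCompactSupport (hεc.fderiv ℝ).norm
  have hlt : ∀ r : EuclideanSpace ℝ (Fin d), ‖fderiv ℝ ε r‖ < 1 := fun r =>
    (le_ciSup hbdd r).trans_lt hsmall
  -- Lipschitz constant
  set K : ℝ≥0 := ⟨max (⨆ r : EuclideanSpace ℝ (Fin d), ‖fderiv ℝ ε r‖) 0, le_max_right _ _⟩ with hKdef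
  have hK1 : K < 1 := by
    rw [← NNReal.coe_lt_coe]
    exact max_lt hsmall one_pos
  have hbound : ∀ r : EuclideanSpace ℝ (Fin d), ‖fderiv ℝ ε r‖₊ ≤ K := by
    intro r
    rw [← NNReal.coe_le_coe]
    exact (le_ciSup hbdd r).trans (le_max_left _ _)
  have hLip : LipschitzWith K ε := lipschitzWith_of_nnnorm_fderiv_le hεd hbound
  -- injectivity
  have hinj : Function.Injective f := by
    intro a b hab
    by_contra hne
    have h1 : a - b = ε b - ε a := by
      have h0 : a + ε a = b + ε b := hab
      rw [sub_eq_sub_iff_add_eq_add]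
      rw [h0, add_comm]
    have h2 : ‖a - b‖ ≤ (K : ℝ) * ‖a - b‖ := by
      calc ‖a - b‖ = ‖ε b - ε a‖ := by rw [h1]
        _ = dist (ε b) (ε a) := (dist_eq_norm _ _).symm
        _ ≤ (K : ℝ) * dist b a := hLip.dist_le_mul b a
        _ = (K : ℝ) * ‖a - b‖ := by rw [dist_eq_norm, norm_sub_rev]
    have h3 : 0 < ‖a - b‖ := by
      simpa [sub_eq_zero] using hne
    have hKr : (K : ℝ) < 1 := by exact_mod_cast hK1
    nlinarith [mul_lt_mul_of_pos_right hKr h3]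
  -- surjectivity via Banach fixed point
  have hsurj : Function.Surjective f := by
    intro y
    set g : EuclideanSpace ℝ (Fin d) → EuclideanSpace ℝ (Fin d) := fun x => y - ε x with hg
    have hgL : LipschitzWith K g := by
      apply LipschitzWith.of_dist_le_mul
      intro a b
      have hd : dist (g a) (g b) = dist (ε a) (ε b) := dist_sub_left _ _ _
      rw [hd]
      exact hLip.dist_le_mul a b
    have hctr : ContractingWith K g := ⟨hK1, hgL⟩
    refine ⟨hctr.fixedPoint g, ?_⟩
    have hfix : g (hctr.fixedPoint g) = hctr.fixedPoint g := hctr.fixedPoint_isFixedPt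
    show hctr.fixedPoint g + ε (hctr.fixedPoint g) = y
    have h2 : hctr.fixedPoint g = y - ε (hctr.fixedPoint g) := hfix.symm
    exact eq_sub_iff_add_eq.mp h2
  -- smoothness
  have hfsm : ContDiff ℝ (⊤ : ℕ∞) f := contDiff_id.add hε
  refine ⟨⟨hinj, hsurj⟩, hfsm, ?_⟩
  rw [contDiff_iff_contDiffAt]
  intro y
  obtain ⟨x, rfl⟩ := hsurj y
  -- invertible derivative at x
  have hu : ‖-(fderiv ℝ ε x)‖ < 1 := by simpa using hlt x
  set u : (EuclideanSpace ℝ (Fin d) →L[ℝ] EuclideanSpace ℝ (Fin d))ˣ := Units.oneSub (-(fderiv ℝ ε x)) hu with hudef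
  set e : EuclideanSpace ℝ (Fin d) ≃L[ℝ] EuclideanSpace ℝ (Fin d) := ContinuousLinearEquiv.ofUnit u with hedef
  have he : (e : EuclideanSpace ℝ (Fin d) →L[ℝ] EuclideanSpace ℝ (Fin d)) = ContinuousLinearMap.id ℝ (EuclideanSpace ℝ (Fin d)) + fderiv ℝ ε x := by
    show (1 : EuclideanSpace ℝ (Fin d) →L[ℝ] EuclideanSpace ℝ (Fin d)) - -(fderiv ℝ ε x) = ContinuousLinearMap.id ℝ (EuclideanSpace ℝ (Fin d)) + fderiv ℝ ε x
    rw [sub_neg_eq_add]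
    rfl
  have hf' : HasFDerivAt f (e : EuclideanSpace ℝ (Fin d) →L[ℝ] EuclideanSpace ℝ (Fin d)) x := by
    rw [he]
    exact (hasFDerivAt_id x).add (hεd x).hasFDerivAt
  have hcda : ContDiffAt ℝ (⊤ : ℕ∞) f x := hfsm.contDiffAt
  have hinv_cd : ContDiffAt ℝ (⊤ : ℕ∞) (hcda.localInverse hf' (by simp)) (f x) :=
    hcda.to_localInverse hf' (by simp)
  have heq : Function.invFun f =ᶠ[nhds (f x)] hcda.localInverse hf' (by simp) := by
    filter_upwards [(hcda.hasStrictFDerivAt' hf' (by simp)).eventually_right_inverse] with z hz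
    exact hinj (by rw [Function.invFun_eq ⟨_, hz⟩]; exact hz.symm)
  exact hinv_cd.congr_of_eventuallyEq heq
end

section
/- Let g : ℝ^d → ℝ^d be a diffeomorphism that agrees with an invertible linear map T outside a compact set K. Then for every Schwartz function φ on ℝ^d, the composition φ ∘ g is again a Schwartz function. -/
/-- If a diffeomorphism `g` of `ℝ^d` agrees with an invertible linear map `T` outside a compact
set `K`, then for any Schwartz function `φ`, the pullback `φ ∘ g` is again Schwartz. -/
theorem schwartz_comp_diffeo_linear_outside_compact {d : ℕ}
    (g : EuclideanSpace ℝ (Fin d) → EuclideanSpace ℝ (Fin d)) (hg : IsDiffeo g)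
    (T : EuclideanSpace ℝ (Fin d) ≃L[ℝ] EuclideanSpace ℝ (Fin d))
    (K : Set (EuclideanSpace ℝ (Fin d))) (hK : IsCompact K)
    (hgT : ∀ x ∉ K, g x = T x)
    (φ : SchwartzMap (EuclideanSpace ℝ (Fin d)) ℝ) :
    ∃ ψ : SchwartzMap (EuclideanSpace ℝ (Fin d)) ℝ, ⇑ψ = ⇑φ ∘ g := by
  obtain ⟨hbij, hsm, hinv⟩ := hg
  have hsm' : ContDiff ℝ ((⊤ : ℕ∞) : WithTop ℕ∞) g := hsm.of_le (by simp)
  have hopen : IsOpen Kᶜ := hK.isClosed.isOpen_compl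
  set L : EuclideanSpace ℝ (Fin d) →L[ℝ] EuclideanSpace ℝ (Fin d) := T.toContinuousLinearMap
  have hTgrowth := L.hasTemperateGrowth
  have htemp : Function.HasTemperateGrowth g := by
    refine ⟨hsm', fun n => ?_⟩
    obtain ⟨k, C, hC⟩ := hTgrowth.2 n
    have hcont : ContinuousOn (fun x => ‖iteratedFDeriv ℝ n g x‖) K :=
      ((hsm.continuous_iteratedFDeriv (by exact_mod_cast le_top)).norm).continuousOn
    obtain ⟨M, hM⟩ := hK.exists_bound_of_continuousOn hcont
    simp only [Real.norm_eq_abs, abs_norm] at hM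
    have hnonneg : (0 : ℝ) ≤ max M (max C 0) :=
      le_trans (le_max_right C 0) (le_max_right M _)
    have hone : ∀ x : EuclideanSpace ℝ (Fin d), (1 : ℝ) ≤ (1 + ‖x‖) ^ k := fun x =>
      one_le_pow₀ (by linarith [norm_nonneg x])
    refine ⟨k, max M (max C 0), fun x => ?_⟩
    by_cases hx : x ∈ K
    · calc ‖iteratedFDeriv ℝ n g x‖ ≤ M := hM x hx
        _ = M * 1 := (mul_one M).symm
        _ ≤ max M (max C 0) * (1 + ‖x‖) ^ k := by
            apply mul_le_mul (le_max_left _ _) (hone x) zero_le_one hnonneg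
    · have heq : iteratedFDeriv ℝ n g x = iteratedFDeriv ℝ n L x := by
        rw [← iteratedFDerivWithin_of_isOpen (f := g) n hopen hx,
          ← iteratedFDerivWithin_of_isOpen (f := L) n hopen hx]
        exact iteratedFDerivWithin_congr (fun y hy => hgT y hy) hx n
      calc ‖iteratedFDeriv ℝ n g x‖ = ‖iteratedFDeriv ℝ n L x‖ := by rw [heq]
        _ ≤ C * (1 + ‖x‖) ^ k := hC x
        _ ≤ max M (max C 0) * (1 + ‖x‖) ^ k := by
            apply mul_le_mul_of_nonneg_right
              (le_trans (le_max_left C 0) (le_max_right M _)) (by positivity)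
  have hupper : ∃ (k : ℕ) (C : ℝ), ∀ x, ‖x‖ ≤ C * (1 + ‖g x‖) ^ k := by
    obtain ⟨M, hM⟩ := hK.exists_bound_of_continuousOn continuous_norm.continuousOn
    simp only [Real.norm_eq_abs, abs_norm] at hM
    refine ⟨1, max M ‖T.symm.toContinuousLinearMap‖, fun x => ?_⟩
    have hone : (1 : ℝ) ≤ (1 + ‖g x‖) ^ 1 := by
      rw [pow_one]; linarith [norm_nonneg (g x)]
    by_cases hx : x ∈ K
    · calc ‖x‖ ≤ M := hM x hx
        _ = M * 1 := (mul_one M).symm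
        _ ≤ max M ‖T.symm.toContinuousLinearMap‖ * (1 + ‖g x‖) ^ 1 :=
          mul_le_mul (le_max_left _ _) hone zero_le_one
            (le_trans (norm_nonneg _) (le_max_right _ _))
    · have hx' : x = T.symm.toContinuousLinearMap (g x) := by
        rw [hgT x hx]; simp
      calc ‖x‖ = ‖T.symm.toContinuousLinearMap (g x)‖ := by rw [← hx']
        _ ≤ ‖T.symm.toContinuousLinearMap‖ * ‖g x‖ := T.symm.toContinuousLinearMap.le_opNorm _
        _ ≤ max M ‖T.symm.toContinuousLinearMap‖ * (1 + ‖g x‖) ^ 1 := by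
          apply mul_le_mul (le_max_right _ _) (by rw [pow_one]; linarith [norm_nonneg (g x)])
            (norm_nonneg _) (le_trans (norm_nonneg _) (le_max_right _ _))
  exact ⟨SchwartzMap.compCLM ℝ htemp hupper φ, rfl⟩
end

section
/- Let ε : ℝ^d → ℝ^d be smooth, compactly supported, with Id + ε a diffeomorphism. Define the canonical lift ε_♯ : ℝ^{2d} → ℝ^{2d} by ε_♯(r, p) = ((Id + ε)(r), (1 + ∇ε(r))^{-1} p), where ∇ε(r) is the Jacobian of ε at r. Then for every Schwartz function φ on ℝ^{2d}, the pullback φ ∘ ε_♯ is again a Schwartz function on ℝ^{2d}. -/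
open scoped ContDiff


variable {D E F G : Type*}
  [NormedAddCommGroup D] [NormedSpace ℝ D]
  [NormedAddCommGroup E] [NormedSpace ℝ E]
  [NormedAddCommGroup F] [NormedSpace ℝ F]
  [NormedAddCommGroup G] [NormedSpace ℝ G]

lemma tg_of_bdd {f : E → F} (hf : ContDiff ℝ ∞ f)
    (h : ∀ n : ℕ, ∃ C : ℝ, ∀ x, ‖iteratedFDeriv ℝ n f x‖ ≤ C) :
    Function.HasTemperateGrowth f := by
  refine ⟨hf, fun n => ?_⟩
  obtain ⟨C, hC⟩ := h n
  exact ⟨0, C, fun x => by simpa using hC x⟩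

lemma tg_compact {f : E → F} (hf : ContDiff ℝ ∞ f) (h : HasCompactSupport f) :
    Function.HasTemperateGrowth f := by
  refine tg_of_bdd hf fun n => ?_
  exact (hf.continuous_iteratedFDeriv (mod_cast le_top)).bounded_above_of_compact_support
    (h.iteratedFDeriv n)

lemma tg_add {f g : E → F} (hf : Function.HasTemperateGrowth f)
    (hg : Function.HasTemperateGrowth g) :
    Function.HasTemperateGrowth (fun x => f x + g x) := by
  refine ⟨hf.1.add hg.1, fun n => ?_⟩
  obtain ⟨kf, Cf, hCf⟩ := hf.2 n
  obtain ⟨kg, Cg, hCg⟩ := hg.2 n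
  refine ⟨max kf kg, max Cf 0 + max Cg 0, fun x => ?_⟩
  have h1 : (1:ℝ) ≤ 1 + ‖x‖ := by simp [norm_nonneg]
  have e : iteratedFDeriv ℝ n (fun x => f x + g x) x
      = iteratedFDeriv ℝ n f x + iteratedFDeriv ℝ n g x :=
    iteratedFDeriv_add_apply (hf.1.contDiffAt.of_le (by exact_mod_cast le_top)) (hg.1.contDiffAt.of_le (by exact_mod_cast le_top))
  calc ‖iteratedFDeriv ℝ n (fun x => f x + g x) x‖
      ≤ ‖iteratedFDeriv ℝ n f x‖ + ‖iteratedFDeriv ℝ n g x‖ := by rw [e]; exact norm_add_le _ _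
    _ ≤ Cf * (1 + ‖x‖) ^ kf + Cg * (1 + ‖x‖) ^ kg := add_le_add (hCf x) (hCg x)
    _ ≤ max Cf 0 * (1 + ‖x‖) ^ max kf kg + max Cg 0 * (1 + ‖x‖) ^ max kf kg := by
        have hp : (0:ℝ) ≤ (1 + ‖x‖) ^ max kf kg := by positivity
        refine add_le_add ?_ ?_
        · exact mul_le_mul (le_max_left _ _) (pow_le_pow_right₀ h1 (le_max_left _ _))
            (by positivity) (le_max_right _ _)
        · exact mul_le_mul (le_max_left _ _) (pow_le_pow_right₀ h1 (le_max_right _ _))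
            (by positivity) (le_max_right _ _)
    _ = (max Cf 0 + max Cg 0) * (1 + ‖x‖) ^ max kf kg := by ring

lemma tg_clm_comp_left (g : F →L[ℝ] G) {f : E → F} (hf : Function.HasTemperateGrowth f) :
    Function.HasTemperateGrowth (fun x => g (f x)) := by
  refine ⟨g.contDiff.comp hf.1, fun n => ?_⟩
  obtain ⟨k, C, hC⟩ := hf.2 n
  refine ⟨k, ‖g‖ * C, fun x => ?_⟩
  have e := g.iteratedFDeriv_comp_left (hf.1.contDiffAt (x := x)) (i := n) (mod_cast le_top)
  have : ‖iteratedFDeriv ℝ n (g ∘ f) x‖ ≤ ‖g‖ * ‖iteratedFDeriv ℝ n f x‖ := by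
    rw [e]; exact g.norm_compContinuousMultilinearMap_le _
  refine le_trans (le_of_eq ?_) (this.trans ?_)
  · rfl
  · rw [mul_assoc]
    exact mul_le_mul_of_nonneg_left (hC x) (norm_nonneg g)

lemma tg_clm_comp_right (A : D →L[ℝ] E) {f : E → F} (hf : Function.HasTemperateGrowth f) :
    Function.HasTemperateGrowth (fun x => f (A x)) := by
  refine ⟨hf.1.comp A.contDiff, fun n => ?_⟩
  obtain ⟨k, C, hC⟩ := hf.2 n
  have hC0 : 0 ≤ C := by
    have := (norm_nonneg (iteratedFDeriv ℝ n f 0)).trans (hC 0)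
    simpa using nonneg_of_mul_nonneg_left this (by positivity)
  refine ⟨k, C * ‖A‖ ^ n * (1 + ‖A‖) ^ k, fun x => ?_⟩
  have e := A.iteratedFDeriv_comp_right hf.1 x (i := n) (mod_cast le_top)
  have h1 : ‖iteratedFDeriv ℝ n (f ∘ A) x‖ ≤ ‖iteratedFDeriv ℝ n f (A x)‖ * ‖A‖ ^ n := by
    rw [e]
    simpa using (iteratedFDeriv ℝ n f (A x)).norm_compContinuousLinearMap_le (fun _ : Fin n => A)
  have h2 : (1 + ‖A x‖) ^ k ≤ ((1 + ‖A‖) * (1 + ‖x‖)) ^ k := by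
    gcongr
    have := A.le_opNorm x
    nlinarith [norm_nonneg A, norm_nonneg x]
  calc ‖iteratedFDeriv ℝ n (fun x => f (A x)) x‖
      = ‖iteratedFDeriv ℝ n (f ∘ A) x‖ := rfl
    _ ≤ ‖iteratedFDeriv ℝ n f (A x)‖ * ‖A‖ ^ n := h1
    _ ≤ C * (1 + ‖A x‖) ^ k * ‖A‖ ^ n := by gcongr; exact hC _
    _ ≤ C * ((1 + ‖A‖) * (1 + ‖x‖)) ^ k * ‖A‖ ^ n := by gcongr
    _ = C * ‖A‖ ^ n * (1 + ‖A‖) ^ k * (1 + ‖x‖) ^ k := by rw [mul_pow]; ring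

lemma tg_bilin (B : E →L[ℝ] F →L[ℝ] G) {f : D → E} {g : D → F}
    (hf : Function.HasTemperateGrowth f) (hg : Function.HasTemperateGrowth g) :
    Function.HasTemperateGrowth (fun x => B (f x) (g x)) := by
  have hsm : ContDiff ℝ ∞ (fun x => B (f x) (g x)) :=
    (B.contDiff.comp hf.1).clm_apply hg.1
  refine ⟨hsm, fun n => ?_⟩
  obtain ⟨kf, Cf, hCf0, hCf⟩ := hf.norm_iteratedFDeriv_le_uniform n
  obtain ⟨kg, Cg, hCg0, hCg⟩ := hg.norm_iteratedFDeriv_le_uniform n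
  refine ⟨kf + kg, ‖B‖ * (2 ^ n * (Cf * Cg)), fun x => ?_⟩
  have h := B.norm_iteratedFDeriv_le_of_bilinear hf.1 hg.1 x (n := n) (mod_cast le_top)
  refine h.trans ?_
  rw [mul_assoc ‖B‖]
  refine mul_le_mul_of_nonneg_left ?_ (norm_nonneg B)
  calc ∑ i ∈ Finset.range (n + 1),
        (n.choose i : ℝ) * ‖iteratedFDeriv ℝ i f x‖ * ‖iteratedFDeriv ℝ (n - i) g x‖
      ≤ ∑ i ∈ Finset.range (n + 1),
        (n.choose i : ℝ) * (Cf * (Cg * (1 + ‖x‖) ^ (kf + kg))) := by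
        refine Finset.sum_le_sum fun i hi => ?_
        rw [Finset.mem_range] at hi
        rw [mul_assoc]
        refine mul_le_mul_of_nonneg_left ?_ (by positivity)
        calc ‖iteratedFDeriv ℝ i f x‖ * ‖iteratedFDeriv ℝ (n - i) g x‖
            ≤ (Cf * (1 + ‖x‖) ^ kf) * (Cg * (1 + ‖x‖) ^ kg) := by
              exact mul_le_mul (hCf i (by omega) x) (hCg (n - i) (by omega) x)
                (norm_nonneg _) (by positivity)
          _ = Cf * (Cg * (1 + ‖x‖) ^ (kf + kg)) := by rw [pow_add]; ring
    _ = (∑ i ∈ Finset.range (n + 1), (n.choose i : ℝ)) * (Cf * (Cg * (1 + ‖x‖) ^ (kf + kg))) := by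
        rw [Finset.sum_mul]
    _ = 2 ^ n * (Cf * Cg) * (1 + ‖x‖) ^ (kf + kg) := by
        rw [← Nat.cast_sum, Nat.sum_range_choose]
        push_cast; ring


/-- For `ε` smooth, compactly supported, with `Id + ε` a diffeomorphism (so that each
`1 + ∇ε(r)` is invertible), the pullback of a Schwartz function on phase space `ℝ^{2d}` by the
canonical lift `ε_♯(r, p) = ((Id + ε) r, (1 + ∇ε(r))⁻¹ p)` is again a Schwartz function. -/
theorem schwartz_pullback_lift {d : ℕ}
    (ε : EuclideanSpace ℝ (Fin d) → EuclideanSpace ℝ (Fin d))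
    (hε : ContDiff ℝ (⊤ : ℕ∞) ε) (hεc : HasCompactSupport ε)
    (hdiff : IsDiffeo (fun r => r + ε r))
    (hinv : ∀ r : EuclideanSpace ℝ (Fin d),
      IsUnit ((1 : EuclideanSpace ℝ (Fin d) →L[ℝ] EuclideanSpace ℝ (Fin d)) + fderiv ℝ ε r))
    (φ : SchwartzMap (EuclideanSpace ℝ (Fin d) × EuclideanSpace ℝ (Fin d)) ℝ) :
    ∃ ψ : SchwartzMap (EuclideanSpace ℝ (Fin d) × EuclideanSpace ℝ (Fin d)) ℝ,
      ⇑ψ = fun q => φ (q.1 + ε q.1, Ring.inverse (1 + fderiv ℝ ε q.1) q.2) := by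
  have hεs : ContDiff ℝ ∞ ε := hε.of_le (by simp)
  have hd' : ContDiff ℝ ∞ (fderiv ℝ ε) := hεs.fderiv_right (by simp)
  have hdc : HasCompactSupport (fderiv ℝ ε) := hεc.fderiv (𝕜 := ℝ)
  have hBs : ContDiff ℝ ∞ (fun r : EuclideanSpace ℝ (Fin d) => Ring.inverse ((1 : EuclideanSpace ℝ (Fin d) →L[ℝ] EuclideanSpace ℝ (Fin d)) + fderiv ℝ ε r)) := by
    rw [contDiff_iff_contDiffAt]
    intro r
    have h1 := contDiffAt_ringInverse (𝕜 := ℝ)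
      (R := EuclideanSpace ℝ (Fin d) →L[ℝ] EuclideanSpace ℝ (Fin d)) (n := ∞) (hinv r).unit
    rw [IsUnit.unit_spec] at h1
    exact h1.comp r (contDiff_const.add hd').contDiffAt
  set Cc : EuclideanSpace ℝ (Fin d) → EuclideanSpace ℝ (Fin d) →L[ℝ] EuclideanSpace ℝ (Fin d) := fun r => Ring.inverse ((1 : EuclideanSpace ℝ (Fin d) →L[ℝ] EuclideanSpace ℝ (Fin d)) + fderiv ℝ ε r) - 1 with hCcdef
  have hCcs : ContDiff ℝ ∞ Cc := hBs.sub contDiff_const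
  have hCcsupp : HasCompactSupport Cc := by
    refine HasCompactSupport.intro hdc fun r hr => ?_
    have h0 : fderiv ℝ ε r = 0 := image_eq_zero_of_notMem_tsupport hr
    simp [hCcdef, h0]
  set g : EuclideanSpace ℝ (Fin d) × EuclideanSpace ℝ (Fin d) → EuclideanSpace ℝ (Fin d) × EuclideanSpace ℝ (Fin d) :=
    fun q => (q.1 + ε q.1, Ring.inverse ((1 : EuclideanSpace ℝ (Fin d) →L[ℝ] EuclideanSpace ℝ (Fin d)) + fderiv ℝ ε q.1) q.2) with hgdef
  have hg : Function.HasTemperateGrowth g := by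
    have t0 : Function.HasTemperateGrowth
        (fun q : EuclideanSpace ℝ (Fin d) × EuclideanSpace ℝ (Fin d) => (ContinuousLinearMap.id ℝ (EuclideanSpace ℝ (Fin d) × EuclideanSpace ℝ (Fin d))) q) :=
      (ContinuousLinearMap.id ℝ (EuclideanSpace ℝ (Fin d) × EuclideanSpace ℝ (Fin d))).hasTemperateGrowth
    have tε : Function.HasTemperateGrowth ε := tg_compact hεs hεc
    have t1 : Function.HasTemperateGrowth
        (fun q : EuclideanSpace ℝ (Fin d) × EuclideanSpace ℝ (Fin d) => (ContinuousLinearMap.inl ℝ (EuclideanSpace ℝ (Fin d)) (EuclideanSpace ℝ (Fin d)))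
          (ε ((ContinuousLinearMap.fst ℝ (EuclideanSpace ℝ (Fin d)) (EuclideanSpace ℝ (Fin d))) q))) :=
      tg_clm_comp_left _ (tg_clm_comp_right _ tε)
    have tCc : Function.HasTemperateGrowth
        (fun q : EuclideanSpace ℝ (Fin d) × EuclideanSpace ℝ (Fin d) => Cc ((ContinuousLinearMap.fst ℝ (EuclideanSpace ℝ (Fin d)) (EuclideanSpace ℝ (Fin d))) q)) :=
      tg_clm_comp_right _ (tg_compact hCcs hCcsupp)
    have tsnd : Function.HasTemperateGrowth
        (fun q : EuclideanSpace ℝ (Fin d) × EuclideanSpace ℝ (Fin d) => (ContinuousLinearMap.snd ℝ (EuclideanSpace ℝ (Fin d)) (EuclideanSpace ℝ (Fin d))) q) :=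
      (ContinuousLinearMap.snd ℝ (EuclideanSpace ℝ (Fin d)) (EuclideanSpace ℝ (Fin d))).hasTemperateGrowth
    have t2' : Function.HasTemperateGrowth
        (fun q : EuclideanSpace ℝ (Fin d) × EuclideanSpace ℝ (Fin d) => (ContinuousLinearMap.id ℝ (EuclideanSpace ℝ (Fin d) →L[ℝ] EuclideanSpace ℝ (Fin d)))
          (Cc ((ContinuousLinearMap.fst ℝ (EuclideanSpace ℝ (Fin d)) (EuclideanSpace ℝ (Fin d))) q)) ((ContinuousLinearMap.snd ℝ (EuclideanSpace ℝ (Fin d)) (EuclideanSpace ℝ (Fin d))) q)) :=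
      tg_bilin _ tCc tsnd
    have t2 : Function.HasTemperateGrowth
        (fun q : EuclideanSpace ℝ (Fin d) × EuclideanSpace ℝ (Fin d) => (ContinuousLinearMap.inr ℝ (EuclideanSpace ℝ (Fin d)) (EuclideanSpace ℝ (Fin d)))
          ((ContinuousLinearMap.id ℝ (EuclideanSpace ℝ (Fin d) →L[ℝ] EuclideanSpace ℝ (Fin d)))
            (Cc ((ContinuousLinearMap.fst ℝ (EuclideanSpace ℝ (Fin d)) (EuclideanSpace ℝ (Fin d))) q)) ((ContinuousLinearMap.snd ℝ (EuclideanSpace ℝ (Fin d)) (EuclideanSpace ℝ (Fin d))) q))) :=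
      tg_clm_comp_left _ t2'
    have hsum := tg_add (tg_add t0 t1) t2
    have hgeq : g = fun q : EuclideanSpace ℝ (Fin d) × EuclideanSpace ℝ (Fin d) =>
        ((ContinuousLinearMap.id ℝ (EuclideanSpace ℝ (Fin d) × EuclideanSpace ℝ (Fin d))) q + (ContinuousLinearMap.inl ℝ (EuclideanSpace ℝ (Fin d)) (EuclideanSpace ℝ (Fin d)))
          (ε ((ContinuousLinearMap.fst ℝ (EuclideanSpace ℝ (Fin d)) (EuclideanSpace ℝ (Fin d))) q))) + (ContinuousLinearMap.inr ℝ (EuclideanSpace ℝ (Fin d)) (EuclideanSpace ℝ (Fin d)))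
          ((ContinuousLinearMap.id ℝ (EuclideanSpace ℝ (Fin d) →L[ℝ] EuclideanSpace ℝ (Fin d)))
            (Cc ((ContinuousLinearMap.fst ℝ (EuclideanSpace ℝ (Fin d)) (EuclideanSpace ℝ (Fin d))) q)) ((ContinuousLinearMap.snd ℝ (EuclideanSpace ℝ (Fin d)) (EuclideanSpace ℝ (Fin d))) q)) := by
      funext q
      refine Prod.ext ?_ ?_
      · simp [hgdef]
      · simp only [hgdef, hCcdef, ContinuousLinearMap.id_apply, ContinuousLinearMap.coe_fst',
          ContinuousLinearMap.coe_snd', ContinuousLinearMap.inl_apply,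
          ContinuousLinearMap.inr_apply, ContinuousLinearMap.sub_apply,
          ContinuousLinearMap.one_apply, Prod.snd_add, add_zero, zero_add]
        abel
    rw [hgeq]
    exact hsum
  obtain ⟨Cε, hCε⟩ := hεs.continuous.bounded_above_of_compact_support hεc
  obtain ⟨Cd, hCd⟩ := hd'.continuous.bounded_above_of_compact_support hdc
  have hCε0 : (0:ℝ) ≤ Cε := (norm_nonneg _).trans (hCε 0)
  have hCd0 : (0:ℝ) ≤ Cd := (norm_nonneg _).trans (hCd 0)
  have hupper : ∃ (k : ℕ) (C : ℝ), ∀ x, ‖x‖ ≤ C * (1 + ‖g x‖) ^ k := by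
    refine ⟨1, 1 + Cε + (1 + Cd), fun q => ?_⟩
    have hgq0 : (0:ℝ) ≤ ‖g q‖ := norm_nonneg _
    have h1 : ‖q.1‖ ≤ ‖g q‖ + Cε := by
      have hstep : ‖q.1‖ ≤ ‖q.1 + ε q.1‖ + ‖ε q.1‖ := by
        calc ‖q.1‖ = ‖(q.1 + ε q.1) - ε q.1‖ := by rw [add_sub_cancel_right]
          _ ≤ ‖q.1 + ε q.1‖ + ‖ε q.1‖ := norm_sub_le _ _
      exact hstep.trans (add_le_add (norm_fst_le (g q)) (hCε q.1))
    have key : ((1 : EuclideanSpace ℝ (Fin d) →L[ℝ] EuclideanSpace ℝ (Fin d)) + fderiv ℝ ε q.1) (Ring.inverse ((1 : EuclideanSpace ℝ (Fin d) →L[ℝ] EuclideanSpace ℝ (Fin d)) + fderiv ℝ ε q.1) q.2)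
        = q.2 := by
      have hmul := Ring.mul_inverse_cancel _ (hinv q.1)
      calc ((1 : EuclideanSpace ℝ (Fin d) →L[ℝ] EuclideanSpace ℝ (Fin d)) + fderiv ℝ ε q.1) (Ring.inverse ((1 : EuclideanSpace ℝ (Fin d) →L[ℝ] EuclideanSpace ℝ (Fin d)) + fderiv ℝ ε q.1) q.2)
          = (((1 : EuclideanSpace ℝ (Fin d) →L[ℝ] EuclideanSpace ℝ (Fin d)) + fderiv ℝ ε q.1) * Ring.inverse ((1 : EuclideanSpace ℝ (Fin d) →L[ℝ] EuclideanSpace ℝ (Fin d)) + fderiv ℝ ε q.1)) q.2 := rfl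
        _ = q.2 := by rw [hmul]; rfl
    have h2 : ‖q.2‖ ≤ (1 + Cd) * ‖g q‖ := by
      have hA : ‖(1 : EuclideanSpace ℝ (Fin d) →L[ℝ] EuclideanSpace ℝ (Fin d)) + fderiv ℝ ε q.1‖ ≤ 1 + Cd := by
        refine (norm_add_le _ _).trans (add_le_add ?_ (hCd q.1))
        exact ContinuousLinearMap.norm_id_le
      calc ‖q.2‖ = ‖((1 : EuclideanSpace ℝ (Fin d) →L[ℝ] EuclideanSpace ℝ (Fin d)) + fderiv ℝ ε q.1)
            (Ring.inverse ((1 : EuclideanSpace ℝ (Fin d) →L[ℝ] EuclideanSpace ℝ (Fin d)) + fderiv ℝ ε q.1) q.2)‖ := by rw [key]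
        _ ≤ ‖(1 : EuclideanSpace ℝ (Fin d) →L[ℝ] EuclideanSpace ℝ (Fin d)) + fderiv ℝ ε q.1‖ * ‖Ring.inverse ((1 : EuclideanSpace ℝ (Fin d) →L[ℝ] EuclideanSpace ℝ (Fin d)) + fderiv ℝ ε q.1) q.2‖ :=
            ContinuousLinearMap.le_opNorm _ _
        _ ≤ (1 + Cd) * ‖g q‖ := by
            refine mul_le_mul hA ?_ (norm_nonneg _) (by positivity)
            exact (norm_snd_le (g q))
    rw [Prod.norm_def, pow_one]
    refine max_le ?_ ?_ <;> nlinarith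
  exact ⟨SchwartzMap.compCLM ℝ hg hupper φ, rfl⟩
end

section
/- Let B be a Banach space, let t ↦ φ_t be a family of Schwartz functions on ℝ^d differentiable in the Schwartz topology at t = a, and let t ↦ u_t be a family of B-valued tempered distributions differentiable in the weak (pointwise) sense at t = a. Then the pairing t ↦ ⟨u_t, φ_t⟩ is differentiable at t = a and d/dt ⟨u_t, φ_t⟩ = ⟨du_t/dt, φ_a⟩ + ⟨u_a, dφ_t/dt⟩. -/
/-!
The difference quotient of `t ↦ ⟨u_t, φ_t⟩` at `a` splits as
`⟨(u_{a+h} - u_a)/h, φ_a⟩ + ⟨u_{a+h}, (φ_{a+h} - φ_a)/h⟩`. The first term converges by the weak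
differentiability of `u`. In the second, the maps `u_{a+h}` converge pointwise, so by
Banach–Steinhaus they are equicontinuous, and an equicontinuous family that converges pointwise
may be evaluated along a convergent sequence of arguments. Banach–Steinhaus needs the Schwartz
space to be barrelled, which holds because it is a Fréchet space. Completeness is the substantial
step: along a Cauchy sequence every weighted iterated derivative converges uniformly, and the
limits are the iterated derivatives of the uniform limit.
-/

open Filter Topology Uniformity
open scoped ContDiff

section BanachSteinhaus

variable {𝕜 E F : Type*} [NontriviallyNormedField 𝕜] [AddCommGroup E] [Module 𝕜 E]
  [UniformSpace E] [IsUniformAddGroup E] [ContinuousSMul 𝕜 E] [BarrelledSpace 𝕜 E]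
  [NormedAddCommGroup F] [NormedSpace 𝕜 F]

theorem BarrelledSpace.tendsto_clm_apply_atTop {T : ℕ → E →L[𝕜] F} {T' : E →L[𝕜] F}
    {x : ℕ → E} {x' : E} (hT : ∀ y, Tendsto (fun n => T n y) atTop (𝓝 (T' y)))
    (hx : Tendsto x atTop (𝓝 x')) :
    Tendsto (fun n => T n (x n)) atTop (𝓝 (T' x')) := by
  have hequi : EquicontinuousAt (fun n => ⇑(T n)) 0 :=
    ((norm_withSeminorms 𝕜 F).banach_steinhaus fun _ y =>
      (hT y).norm.bddAbove_range).equicontinuous 0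
  have hsmall : Tendsto (fun n => T n (x n - x')) atTop (𝓝 0) := by
    refine Metric.tendsto_nhds.2 fun ε hε => ?_
    have hx0 : Tendsto (fun n => x n - x') atTop (𝓝 0) := by
      simpa using hx.sub_const x'
    filter_upwards [hx0.eventually (Metric.equicontinuousAt_iff_right.1 hequi ε hε)] with n hn
    simpa [dist_comm] using hn n
  simpa using hsmall.add (hT x')

theorem BarrelledSpace.tendsto_clm_apply {ι : Type*} {l : Filter ι} [l.IsCountablyGenerated]
    {T : ι → E →L[𝕜] F} {T' : E →L[𝕜] F} {x : ι → E} {x' : E}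
    (hT : ∀ y, Tendsto (fun i => T i y) l (𝓝 (T' y))) (hx : Tendsto x l (𝓝 x')) :
    Tendsto (fun i => T i (x i)) l (𝓝 (T' x')) :=
  tendsto_iff_seq_tendsto.2 fun _ hs =>
    tendsto_clm_apply_atTop (fun y => (hT y).comp hs) (hx.comp hs)

end BanachSteinhaus

theorem hasFTaylorSeriesUpTo_of_tendstoUniformly {𝕜 E F ι : Type*} [RCLike 𝕜]
    [NormedAddCommGroup E] [NormedSpace 𝕜 E] [NormedAddCommGroup F] [NormedSpace 𝕜 F]
    {l : Filter ι} [l.NeBot] {f : ι → E → F} {p : E → FormalMultilinearSeries 𝕜 E F}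
    (hf : ∀ i, ContDiff 𝕜 ∞ (f i))
    (hp : ∀ n, TendstoUniformly (fun i x => iteratedFDeriv 𝕜 n (f i) x) (fun x => p x n) l) :
    HasFTaylorSeriesUpTo ∞ (fun x => (p x 0).curry0) p where
  zero_eq _ := rfl
  fderiv m _ x := by
    refine hasFDerivAt_of_tendstoUniformly
      (f' := fun i y => (iteratedFDeriv 𝕜 (m + 1) (f i) y).curryLeft)
      ((continuousMultilinearCurryLeftEquiv 𝕜 (fun _ : Fin (m + 1) => E) F).isometry
        |>.uniformContinuous.comp_tendstoUniformly (hp (m + 1)))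
      (fun i y => ?_) (fun y => (hp m).tendsto_at y) x
    exact ((hf i).differentiable_iteratedFDeriv (mod_cast ENat.natCast_lt_top m) y).hasFDerivAt
  cont m _ := (hp m).continuous (Eventually.of_forall fun i =>
    (hf i).continuous_iteratedFDeriv (mod_cast le_top)).frequently

namespace SchwartzMap

variable {E F : Type*} [NormedAddCommGroup E] [NormedSpace ℝ E]
  [NormedAddCommGroup F] [NormedSpace ℝ F]

-- Together with completeness this makes `𝓢(E, F)` a Baire space, hence barrelled.
instance : (𝓤 𝓢(E, F)).IsCountablyGenerated :=
  IsUniformAddGroup.uniformity_countably_generated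

theorem iteratedFDeriv_sub_apply (f g : 𝓢(E, F)) (n : ℕ) (x : E) :
    iteratedFDeriv ℝ n ⇑(f - g) x = iteratedFDeriv ℝ n f x - iteratedFDeriv ℝ n g x :=
  _root_.iteratedFDeriv_sub_apply ((f.smooth n).contDiffAt) ((g.smooth n).contDiffAt)

theorem tendsto_of_eventually_pow_mul_norm_iteratedFDeriv_sub_le {ι : Type*} {l : Filter ι}
    {f : ι → 𝓢(E, F)} {g : 𝓢(E, F)}
    (h : ∀ k n : ℕ, ∀ ε > 0, ∀ᶠ i in l, ∀ x,
      ‖x‖ ^ k * ‖iteratedFDeriv ℝ n (f i) x - iteratedFDeriv ℝ n g x‖ ≤ ε) :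
    Tendsto f l (𝓝 g) := by
  refine ((schwartz_withSeminorms ℝ E F).tendsto_nhds f g).2 fun ⟨k, n⟩ ε hε => ?_
  filter_upwards [h k n (ε / 2) (half_pos hε)] with i hi
  refine lt_of_le_of_lt (seminorm_le_bound ℝ k n _ (half_pos hε).le fun x => ?_) (half_lt_self hε)
  rw [iteratedFDeriv_sub_apply]
  exact hi x

theorem eventually_pow_mul_norm_iteratedFDeriv_sub_lt {f : ℕ → 𝓢(E, F)} (hf : CauchySeq f)
    (k n : ℕ) {ε : ℝ} (hε : 0 < ε) :
    ∀ᶠ pq : ℕ × ℕ in atTop, ∀ x,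
      ‖x‖ ^ k * ‖iteratedFDeriv ℝ n (f pq.1) x - iteratedFDeriv ℝ n (f pq.2) x‖ < ε := by
  have hsub := ((IsUniformAddGroup.cauchy_map_iff_tendsto atTop f).1 hf).2
  rw [← prod_atTop_atTop_eq]
  filter_upwards [((schwartz_withSeminorms ℝ E F).tendsto_nhds _ 0).1 hsub (k, n) ε hε]
    with pq hpq x
  rw [← iteratedFDeriv_sub_apply]
  exact (le_seminorm ℝ k n _ x).trans_lt (by simpa using hpq)

theorem eventually_pow_mul_norm_iteratedFDeriv_sub_le_of_tendsto {f : ℕ → 𝓢(E, F)}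
    (hf : CauchySeq f) {k n : ℕ} {g : E → E [×n]→L[ℝ] F}
    (hg : ∀ x, Tendsto (fun m => iteratedFDeriv ℝ n (f m) x) atTop (𝓝 (g x)))
    {ε : ℝ} (hε : 0 < ε) :
    ∀ᶠ p in atTop, ∀ x, ‖x‖ ^ k * ‖iteratedFDeriv ℝ n (f p) x - g x‖ ≤ ε := by
  filter_upwards [eventually_atTop_curry (eventually_pow_mul_norm_iteratedFDeriv_sub_lt hf k n hε)]
    with p hp x
  refine le_of_tendsto ((tendsto_const_nhds.sub (hg x)).norm.const_mul _) ?_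
  filter_upwards [hp] with q hq
  exact (hq x).le

instance instCompleteSpace [CompleteSpace F] : CompleteSpace 𝓢(E, F) := by
  refine UniformSpace.complete_of_cauchySeq_tendsto fun f hf => ?_
  have hpointwise (x : E) (n : ℕ) : CauchySeq fun m => iteratedFDeriv ℝ n (f m) x := by
    refine Metric.cauchySeq_iff.2 fun ε hε => ?_
    obtain ⟨N, hN⟩ :=
      eventually_atTop_prod_self'.1 (eventually_pow_mul_norm_iteratedFDeriv_sub_lt hf 0 n hε)
    exact ⟨N, fun p hp q hq => by simpa [dist_eq_norm] using hN p hp q hq x⟩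
  choose p hp using fun x n => cauchySeq_tendsto_of_complete (hpointwise x n)
  have hclose (k n : ℕ) {ε : ℝ} (hε : 0 < ε) :=
    eventually_pow_mul_norm_iteratedFDeriv_sub_le_of_tendsto (k := k) hf (fun x => hp x n) hε
  have hunif (n : ℕ) :
      TendstoUniformly (fun m x => iteratedFDeriv ℝ n (f m) x) (fun x => p x n) atTop := by
    refine Metric.tendstoUniformly_iff.2 fun ε hε => ?_
    filter_upwards [hclose 0 n (half_pos hε)] with m hm x
    have hmx := hm x
    rw [pow_zero, one_mul] at hmx
    rw [dist_comm, dist_eq_norm]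
    exact hmx.trans_lt (half_lt_self hε)
  have hTaylor := hasFTaylorSeriesUpTo_of_tendstoUniformly (fun m => (f m).smooth ⊤) hunif
  have hderiv (n : ℕ) (x : E) : iteratedFDeriv ℝ n (fun x => (p x 0).curry0) x = p x n :=
    (hTaylor.eq_iteratedFDeriv (mod_cast le_top) x).symm
  have hdecay (k n : ℕ) :
      ∃ C, ∀ x, ‖x‖ ^ k * ‖iteratedFDeriv ℝ n (fun x => (p x 0).curry0) x‖ ≤ C := by
    obtain ⟨m, hm⟩ := (hclose k n one_pos).exists
    refine ⟨SchwartzMap.seminorm ℝ k n (f m) + 1, fun x => ?_⟩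
    calc ‖x‖ ^ k * ‖iteratedFDeriv ℝ n (fun x => (p x 0).curry0) x‖
        ≤ ‖x‖ ^ k * ‖iteratedFDeriv ℝ n (f m) x‖
          + ‖x‖ ^ k * ‖iteratedFDeriv ℝ n (f m) x - p x n‖ := by
          rw [hderiv, ← mul_add]
          gcongr
          exact norm_le_norm_add_norm_sub _ _
      _ ≤ _ := add_le_add (le_seminorm ℝ k n _ x) (hm x)
  let g : 𝓢(E, F) := ⟨fun x => (p x 0).curry0, hTaylor.contDiff, hdecay⟩
  refine ⟨g, tendsto_of_eventually_pow_mul_norm_iteratedFDeriv_sub_le fun k n ε hε => ?_⟩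
  filter_upwards [hclose k n hε] with m hm x
  exact (hderiv n x).symm ▸ hm x

end SchwartzMap

/-- Leibniz rule for the pairing of a differentiable family of `B`-valued tempered
distributions with a differentiable family of Schwartz functions. -/
theorem leibniz_pairing {d : ℕ} {B : Type*} [NormedAddCommGroup B] [NormedSpace ℝ B]
    (u : ℝ → SchwartzMap (EuclideanSpace ℝ (Fin d)) ℝ →L[ℝ] B)
    (φ : ℝ → SchwartzMap (EuclideanSpace ℝ (Fin d)) ℝ) (a : ℝ)
    (φ' : SchwartzMap (EuclideanSpace ℝ (Fin d)) ℝ)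
    (u' : SchwartzMap (EuclideanSpace ℝ (Fin d)) ℝ →L[ℝ] B)
    -- `φ` is differentiable at `a` in the Schwartz (Fréchet) topology, with derivative `φ'`:
    (hφ : Tendsto (fun h : ℝ => h⁻¹ • (φ (a + h) - φ a)) (nhdsWithin 0 {0}ᶜ) (nhds φ'))
    -- `u` is differentiable at `a` in the weak (pointwise) sense, with derivative `u'`:
    (hu : ∀ ψ : SchwartzMap (EuclideanSpace ℝ (Fin d)) ℝ,
      Tendsto (fun h : ℝ => h⁻¹ • (u (a + h) ψ - u a ψ)) (nhdsWithin 0 {0}ᶜ) (nhds (u' ψ))) :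
    HasDerivAt (fun t => u t (φ t)) (u' (φ a) + u a φ') a := by
  have hu_cont (ψ : SchwartzMap (EuclideanSpace ℝ (Fin d)) ℝ) :
      Tendsto (fun h : ℝ => u (a + h) ψ) (𝓝[≠] 0) (𝓝 (u a ψ)) := by
    have hcont : ContinuousAt (fun t => u t ψ) a :=
      (hasDerivAt_iff_tendsto_slope_zero (f := fun t => u t ψ).2 (hu ψ)).continuousAt
    have hshift : Tendsto (fun h : ℝ => a + h) (𝓝[≠] 0) (𝓝 a) :=
      ((continuous_const_add a).tendsto' 0 a (add_zero a)).mono_left nhdsWithin_le_nhds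
    exact hcont.tendsto.comp hshift
  have hpair : Tendsto (fun h : ℝ => u (a + h) (h⁻¹ • (φ (a + h) - φ a))) (𝓝[≠] 0)
      (𝓝 (u a φ')) :=
    BarrelledSpace.tendsto_clm_apply hu_cont hφ
  rw [hasDerivAt_iff_tendsto_slope_zero]
  refine ((hu (φ a)).add hpair).congr fun h => ?_
  rw [map_smul, map_sub, ← smul_add, sub_add_sub_cancel']
end
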